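/- arXiv:2510.16876 — 6 statements merged into one kernel-verified Lean document; each statement's English description precedes it below -/
import Mathlib

section
/- Let A and B be associative algebras over a field F with char F ≠ 2, and let φ : A → B be a Jordan homomorphism. Then φ([x,y]²) = [φ(x),φ(y)]² for all x, y ∈ A. -/
/-!
Linearizing `φ (x * x) = φ x * φ x` shows that `φ` preserves the Jordan product `x * y + y * x`,
and applying this to `x * y + y * x` and `x` shows that, once `2` can be cancelled, `φ` also
preserves the triple product `x * y * x`. The square of a commutator is a combination of Jordan
and triple products:
`[x, y] ^ 2 = (x * y * x) * y + y * (x * y * x) - x * y ^ 2 * x - y * x ^ 2 * y`.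
-/

section JordanHom

variable {A B : Type*}

theorem commutator_mul_self_eq [NonUnitalRing A] (x y : A) :
    (x * y - y * x) * (x * y - y * x) =
      x * y * x * y + y * (x * y * x) - x * (y * y) * x - y * (x * x) * y := by
  noncomm_ring

theorem map_mul_add_mul_of_map_mul_self [NonUnitalNonAssocRing A] [NonUnitalNonAssocRing B]
    (φ : A →+ B) (hφ : ∀ x, φ (x * x) = φ x * φ x) (x y : A) :
    φ (x * y + y * x) = φ x * φ y + φ y * φ x := by
  have h := hφ (x + y)
  simp only [add_mul, mul_add, map_add, hφ] at h
  rw [← sub_eq_zero] at h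
  rw [map_add, ← sub_eq_zero, ← h]
  abel

theorem map_mul_mul_of_map_mul_self [NonUnitalRing A] [NonUnitalRing B]
    (hB : Function.Injective fun b : B => b + b)
    (φ : A →+ B) (hφ : ∀ x, φ (x * x) = φ x * φ x) (x y : A) :
    φ (x * y * x) = φ x * φ y * φ x := by
  have hjordan := map_mul_add_mul_of_map_mul_self φ hφ
  have h := hjordan (x * y + y * x) x
  have hexpand : (x * y + y * x) * x + x * (x * y + y * x) =
      (x * x * y + y * (x * x)) + (x * y * x + x * y * x) := by
    noncomm_ring
  rw [hexpand, map_add, hjordan (x * x) y, map_add, hφ, hjordan x y] at h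
  exact hB (add_left_cancel (h.trans (by noncomm_ring)))

end JordanHom

theorem jordan_hom_preserves_commutator_square_general
    {F A B : Type*} [Field F] (h2 : (2 : F) ≠ 0)
    [NonUnitalRing A] [Module F A]
    [NonUnitalRing B] [Module F B]
    (φ : A →ₗ[F] B) (hφ : ∀ x : A, φ (x * x) = φ x * φ x) :
    ∀ x y : A,
      φ ((x * y - y * x) * (x * y - y * x)) =
        (φ x * φ y - φ y * φ x) * (φ x * φ y - φ y * φ x) := by
  intro x y
  have hB : Function.Injective fun b : B => b + b := fun b c h =>
    smul_right_injective B h2 (by simpa only [two_smul] using h)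
  have hjordan := map_mul_add_mul_of_map_mul_self φ.toAddMonoidHom hφ
  have htriple := map_mul_mul_of_map_mul_self hB φ.toAddMonoidHom hφ
  simp only [LinearMap.toAddMonoidHom_coe] at hjordan htriple
  rw [commutator_mul_self_eq x y, commutator_mul_self_eq (φ x) (φ y), map_sub, map_sub,
    hjordan, htriple, htriple, htriple, hφ, hφ]

theorem jordan_hom_preserves_commutator_square
    {F A B : Type*} [Field F] (h2 : (2 : F) ≠ 0)
    [NonUnitalRing A] [Module F A] [SMulCommClass F A A] [IsScalarTower F A A]
    [NonUnitalRing B] [Module F B] [SMulCommClass F B B] [IsScalarTower F B B]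
    (φ : A →ₗ[F] B) (hφ : ∀ x : A, φ (x * x) = φ x * φ x) :
    ∀ x y : A,
      φ ((x * y - y * x) * (x * y - y * x)) =
        (φ x * φ y - φ y * φ x) * (φ x * φ y - φ y * φ x) :=
  jordan_hom_preserves_commutator_square_general h2 φ hφ
end

section
/- Let A and B be associative algebras over a field F with char F ≠ 2, and let φ : A → B be a Jordan homomorphism. Define h(a,b) = φ(ab) − φ(a)φ(b) and k(a,b) = φ(ab) − φ(b)φ(a). Then h(a,b)·k(a,b) = 0 for all a, b ∈ A. -/
/-!
Polarizing `φ (x * x) = φ x * φ x` gives `φ (x * y + y * x) = φ x * φ y + φ y * φ x`; applied to `x`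
and `x * y + y * x`, and halved (char `F ≠ 2`), this gives `φ (x * y * x) = φ x * φ y * φ x`, whose
linearization is `φ (x * y * z + z * y * x) = φ x * φ y * φ z + φ z * φ y * φ x`. Now
`h(a,b) k(a,b)` expands to `φ(ab)² + φ a φ b² φ a - (φ a φ b φ(ab) + φ(ab) φ b φ a)`: the first two terms
are `φ((ab)(ab) + a b² a)` and the last two are `φ(a b (ab) + (ab) b a)`, the same element of `A`.
-/

def IsJordanHom {A B : Type*} [NonUnitalNonAssocRing A] [NonUnitalNonAssocRing B] (φ : A →+ B) :
    Prop :=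
  ∀ x, φ (x * x) = φ x * φ x

section NonAssoc

variable {A B : Type*} [NonUnitalNonAssocRing A] [NonUnitalNonAssocRing B]

theorem IsJordanHom.map_mul_add_mul_swap {φ : A →+ B} (hφ : IsJordanHom φ) (x y : A) :
    φ (x * y + y * x) = φ x * φ y + φ y * φ x := by
  have h := hφ (x + y)
  simp only [mul_add, add_mul, map_add, hφ x, hφ y] at h
  rw [map_add, ← sub_eq_zero, ← sub_eq_zero_of_eq h]
  abel

theorem map_mul_mul_add_mul_mul_rev (φ : A →+ B)
    (h : ∀ x y : A, φ (x * y * x) = φ x * φ y * φ x) (x y z : A) :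
    φ (x * y * z + z * y * x) = φ x * φ y * φ z + φ z * φ y * φ x := by
  have hxz := h (x + z) y
  simp only [mul_add, add_mul, map_add, h] at hxz
  rw [map_add, ← sub_eq_zero, ← sub_eq_zero_of_eq hxz]
  abel

end NonAssoc

theorem IsJordanHom.map_mul_mul_self {F A B : Type*} [Field F] (h2 : (2 : F) ≠ 0)
    [NonUnitalRing A] [NonUnitalRing B] [Module F B] {φ : A →+ B} (hφ : IsJordanHom φ)
    (x y : A) : φ (x * y * x) = φ x * φ y * φ x := by
  apply smul_right_injective B h2
  have h := hφ.map_mul_add_mul_swap x (x * y + y * x)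
  rw [show x * (x * y + y * x) + (x * y + y * x) * x = x * x * y + y * (x * x) + 2 • (x * y * x) by
    noncomm_ring, map_add, map_nsmul, hφ.map_mul_add_mul_swap, hφ, hφ.map_mul_add_mul_swap] at h
  simp only [ofNat_smul_eq_nsmul]
  rw [← add_left_cancel_iff (a := φ x * φ x * φ y + φ y * (φ x * φ x)), h]
  noncomm_ring

theorem jordan_hom_hk_eq_zero_general
    {F A B : Type*} [Field F] (h2 : (2 : F) ≠ 0)
    [NonUnitalRing A] [Module F A]
    [NonUnitalRing B] [Module F B]
    (φ : A →ₗ[F] B) (hφ : ∀ x : A, φ (x * x) = φ x * φ x) :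
    ∀ a b : A, (φ (a * b) - φ a * φ b) * (φ (a * b) - φ b * φ a) = 0 := by
  intro a b
  have hsandwich : ∀ x y : A, φ (x * y * x) = φ x * φ y * φ x :=
    IsJordanHom.map_mul_mul_self h2 (φ := φ.toAddMonoidHom) hφ
  have hsq : φ (a * b * (a * b) + a * b * b * a)
      = φ (a * b) * φ (a * b) + φ a * (φ b * φ b) * φ a := by
    rw [show a * b * (a * b) + a * b * b * a = a * b * (a * b) + a * (b * b) * a by noncomm_ring,
      map_add, hφ, hsandwich, hφ]
  have htriple := map_mul_mul_add_mul_mul_rev φ.toAddMonoidHom hsandwich a b (a * b)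
  calc (φ (a * b) - φ a * φ b) * (φ (a * b) - φ b * φ a)
      = (φ (a * b) * φ (a * b) + φ a * (φ b * φ b) * φ a)
        - (φ a * φ b * φ (a * b) + φ (a * b) * φ b * φ a) := by noncomm_ring
    _ = 0 := by rw [← hsq]; exact sub_eq_zero_of_eq htriple

theorem jordan_hom_hk_eq_zero
    {F A B : Type*} [Field F] (h2 : (2 : F) ≠ 0)
    [NonUnitalRing A] [Module F A] [SMulCommClass F A A] [IsScalarTower F A A]
    [NonUnitalRing B] [Module F B] [SMulCommClass F B B] [IsScalarTower F B B]
    (φ : A →ₗ[F] B) (hφ : ∀ x : A, φ (x * x) = φ x * φ x) :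
    ∀ a b : A, (φ (a * b) - φ a * φ b) * (φ (a * b) - φ b * φ a) = 0 :=
  jordan_hom_hk_eq_zero_general h2 φ hφ
end

section
/- Let A and B be associative algebras over a field F with char F ≠ 2, and let φ : A → B be a Jordan homomorphism. Define h(a,b) = φ(ab) − φ(a)φ(b) and k(a,b) = φ(ab) − φ(b)φ(a). Then h(a,b)φ(x)k(a,b) + k(a,b)φ(x)h(a,b) = 0 for all a, b, x ∈ A. -/
/-!
A Jordan homomorphism preserves the Jordan product `ab + ba` (polarize `φ(x²) = φ(x)²`) and hence,
when `2` is invertible, the triple product `axa = ½((a(ax + xa) + (ax + xa)a) - (a²x + xa²))` and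
its polarization `axc + cxa`. Evaluating `φ` on `(ab)x(ba) + (ba)x(ab) = a(bxb)a + b(axa)b` in these
two ways and eliminating `φ(ba) = φ(a)φ(b) + φ(b)φ(a) - φ(ab)` gives the identity.
-/

section JordanHom

variable {A B G : Type*} [NonUnitalRing A] [NonUnitalRing B] [FunLike G A B]
  [AddMonoidHomClass G A B] (φ : G) (hφ : ∀ x : A, φ (x * x) = φ x * φ x)
include hφ

theorem map_mul_add_mul_swap_of_map_mul_self (a b : A) :
    φ (a * b + b * a) = φ a * φ b + φ b * φ a := by
  have h := hφ (a + b)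
  rw [show (a + b) * (a + b) = a * a + (a * b + b * a) + b * b by noncomm_ring] at h
  simp only [map_add, hφ] at h
  rw [map_add]
  linear_combination (norm := noncomm_ring) h

theorem map_mul_mul_self_of_map_mul_self {F : Type*} [Field F] [Module F B] (h2 : (2 : F) ≠ 0)
    (a x : A) : φ (a * x * a) = φ a * φ x * φ a := by
  have h := map_mul_add_mul_swap_of_map_mul_self φ hφ a (a * x + x * a)
  rw [show a * (a * x + x * a) + (a * x + x * a) * a
      = (a * a * x + x * (a * a)) + (a * x * a + a * x * a) by noncomm_ring,
    map_add, map_mul_add_mul_swap_of_map_mul_self φ hφ, map_add,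
    map_mul_add_mul_swap_of_map_mul_self φ hφ, hφ] at h
  have two_mul_eq : (2 : F) • φ (a * x * a) = (2 : F) • (φ a * φ x * φ a) := by
    rw [two_smul, two_smul]
    linear_combination (norm := noncomm_ring) h
  exact smul_right_injective B h2 two_mul_eq

theorem map_mul_mul_add_mul_mul_of_map_mul_self {F : Type*} [Field F] [Module F B]
    (h2 : (2 : F) ≠ 0) (a x c : A) :
    φ (a * x * c + c * x * a) = φ a * φ x * φ c + φ c * φ x * φ a := by
  have h := map_mul_mul_self_of_map_mul_self φ hφ h2 (a + c) x
  rw [show (a + c) * x * (a + c) = a * x * a + (a * x * c + c * x * a) + c * x * c by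
      noncomm_ring] at h
  simp only [map_add, map_mul_mul_self_of_map_mul_self φ hφ h2] at h
  rw [map_add]
  linear_combination (norm := noncomm_ring) h

theorem map_mul_mul_map_mul_swap_add_swap_of_map_mul_self {F : Type*} [Field F] [Module F B]
    (h2 : (2 : F) ≠ 0) (a b x : A) :
    φ (a * b) * φ x * φ (b * a) + φ (b * a) * φ x * φ (a * b)
      = φ a * φ b * φ x * (φ b * φ a) + φ b * φ a * φ x * (φ a * φ b) := by
  have h := map_mul_mul_add_mul_mul_of_map_mul_self φ hφ h2 (a * b) x (b * a)
  rw [show a * b * x * (b * a) + b * a * x * (a * b) = a * (b * x * b) * a + b * (a * x * a) * b by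
      noncomm_ring, map_add] at h
  simp only [map_mul_mul_self_of_map_mul_self φ hφ h2] at h
  linear_combination (norm := noncomm_ring) -h

end JordanHom

theorem jordan_hom_hxk_plus_kxh_eq_zero_general
    {F A B : Type*} [Field F] (h2 : (2 : F) ≠ 0)
    [NonUnitalRing A] [Module F A]
    [NonUnitalRing B] [Module F B]
    (φ : A →ₗ[F] B) (hφ : ∀ x : A, φ (x * x) = φ x * φ x) :
    ∀ a b x : A,
      (φ (a * b) - φ a * φ b) * φ x * (φ (a * b) - φ b * φ a) +
        (φ (a * b) - φ b * φ a) * φ x * (φ (a * b) - φ a * φ b) = 0 := by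
  intro a b x
  have swap : φ (b * a) = φ a * φ b + φ b * φ a - φ (a * b) := by
    rw [← map_mul_add_mul_swap_of_map_mul_self φ hφ, map_add]
    abel
  have h := map_mul_mul_map_mul_swap_add_swap_of_map_mul_self φ hφ h2 a b x
  rw [swap] at h
  linear_combination (norm := noncomm_ring) -h

theorem jordan_hom_hxk_plus_kxh_eq_zero
    {F A B : Type*} [Field F] (h2 : (2 : F) ≠ 0)
    [NonUnitalRing A] [Module F A] [SMulCommClass F A A] [IsScalarTower F A A]
    [NonUnitalRing B] [Module F B] [SMulCommClass F B B] [IsScalarTower F B B]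
    (φ : A →ₗ[F] B) (hφ : ∀ x : A, φ (x * x) = φ x * φ x) :
    ∀ a b x : A,
      (φ (a * b) - φ a * φ b) * φ x * (φ (a * b) - φ b * φ a) +
        (φ (a * b) - φ b * φ a) * φ x * (φ (a * b) - φ a * φ b) = 0 :=
  jordan_hom_hxk_plus_kxh_eq_zero_general h2 φ hφ
end

section
/- Let A be an associative algebra over a field F with char F ≠ 2 and let B be a prime associative algebra. Every surjective Jordan homomorphism φ : A → B is either a homomorphism or an antihomomorphism. -/
/-!
Polarizing `φ (x * x) = φ x * φ x` gives `φ (x * y * x) = φ x * φ y * φ x` (this is where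
`2` must be cancellable) and hence, for the two defects `δ = φ (a * b) - φ a * φ b` and
`δ' = φ (a * b) - φ b * φ a`, the identity `δ * φ c * δ' + δ' * φ c * δ = 0`. Since `φ` is
onto, primeness (with no `2`-torsion) of `B` gives `δ = 0` or `δ' = 0` for each pair `a, b`.
A group is never the union of two proper subgroups, so one of the two alternatives holds for
all `b` at fixed `a`, and then for all `a`.
-/

theorem AddMonoidHom.eq_zero_or_eq_zero_of_forall {G N : Type*} [AddGroup G] [AddZeroClass N]
    {f g : G →+ N} (h : ∀ x, f x = 0 ∨ g x = 0) : f = 0 ∨ g = 0 := by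
  have := (AddSubgroupClass.subset_union (H := (⊤ : AddSubgroup G)) (K := f.ker) (L := g.ker)).mp
    fun x _ => h x
  simpa only [top_le_iff, AddMonoidHom.ker_eq_top_iff] using this

section PrimeRing

variable {B : Type*} [NonUnitalRing B]
  (hprime : ∀ a b : B, (∀ y : B, a * y * b = 0) → a = 0 ∨ b = 0)
  (htwo : ∀ u : B, u + u = 0 → u = 0)
include hprime htwo

theorem eq_zero_or_eq_zero_of_forall_mul_mul_add_mul_mul_eq_zero {u v : B}
    (h : ∀ y : B, u * y * v + v * y * u = 0) : u = 0 ∨ v = 0 := by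
  by_cases hv : v = 0
  · exact Or.inr hv
  -- `v B (u w v) = 0`: move `u` and `v` past each other three times, picking up a sign each time
  have hvuv : ∀ w x : B, v * x * (u * w * v) = 0 := by
    intro w x
    apply htwo
    linear_combination (norm := noncomm_ring) h x * (w * v) - h (x * v * w) + (v * x) * h w
  exact hprime u v fun w => (hprime v _ (hvuv w)).resolve_left hv

end PrimeRing

section JordanMap

variable {A B : Type*} [NonUnitalRing A] [NonUnitalRing B]
  {φ : A →+ B} (hφ : ∀ x : A, φ (x * x) = φ x * φ x)
include hφ

theorem jordan_map_mul_add_mul_swap (x y : A) :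
    φ (x * y) + φ (y * x) = φ x * φ y + φ y * φ x := by
  have h := hφ (x + y)
  rw [show (x + y) * (x + y) = x * x + (x * y + y * x) + y * y by noncomm_ring] at h
  simp only [map_add, hφ x, hφ y] at h
  linear_combination (norm := noncomm_ring) h

theorem jordan_map_mul_mul_self (htwo : ∀ u : B, u + u = 0 → u = 0) (x y : A) :
    φ (x * y * x) = φ x * φ y * φ x := by
  have e := jordan_map_mul_add_mul_swap hφ x (x * y + y * x)
  rw [show x * (x * y + y * x) = x * x * y + x * y * x by noncomm_ring,
    show (x * y + y * x) * x = x * y * x + y * (x * x) by noncomm_ring] at e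
  simp only [map_add] at e
  have e2 := jordan_map_mul_add_mul_swap hφ (x * x) y
  have e3 := jordan_map_mul_add_mul_swap hφ x y
  rw [hφ x] at e2
  rw [← sub_eq_zero]
  apply htwo
  linear_combination (norm := noncomm_ring) e - e2 + φ x * e3 + e3 * φ x

theorem jordan_map_mul_mul_add_mul_mul_swap (htwo : ∀ u : B, u + u = 0 → u = 0) (x y z : A) :
    φ (x * y * z) + φ (z * y * x) = φ x * φ y * φ z + φ z * φ y * φ x := by
  have e := jordan_map_mul_mul_self hφ htwo (x + z) y
  rw [show (x + z) * y * (x + z) = x * y * x + (x * y * z + z * y * x) + z * y * z by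
    noncomm_ring] at e
  simp only [map_add, jordan_map_mul_mul_self hφ htwo] at e
  linear_combination (norm := noncomm_ring) e

theorem jordan_defect_mul_mul_defect_swap_add (htwo : ∀ u : B, u + u = 0 → u = 0) (a b c : A) :
    (φ (a * b) - φ a * φ b) * φ c * (φ (a * b) - φ b * φ a)
      + (φ (a * b) - φ b * φ a) * φ c * (φ (a * b) - φ a * φ b) = 0 := by
  have e := jordan_map_mul_mul_add_mul_mul_swap hφ htwo (a * b) c (b * a)
  rw [show a * b * c * (b * a) = a * (b * c * b) * a by noncomm_ring,
    show b * a * c * (a * b) = b * (a * c * a) * b by noncomm_ring] at e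
  simp only [jordan_map_mul_mul_self hφ htwo] at e
  have e2 := jordan_map_mul_add_mul_swap hφ a b
  linear_combination (norm := noncomm_ring) e + φ (a * b) * φ c * e2 + e2 * φ c * φ (a * b)

end JordanMap

theorem herstein_prime_general
    {F A B : Type*} [Field F] (h2 : (2 : F) ≠ 0)
    [NonUnitalRing A] [Module F A]
    [NonUnitalRing B] [Module F B]
    (hprime : ∀ a b : B, (∀ y : B, a * y * b = 0) → a = 0 ∨ b = 0)
    (φ : A →ₗ[F] B) (hφ : ∀ x : A, φ (x * x) = φ x * φ x)
    (hsurj : Function.Surjective φ) :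
    (∀ a b : A, φ (a * b) = φ a * φ b) ∨ (∀ a b : A, φ (a * b) = φ b * φ a) := by
  have htwo (u : B) (hu : u + u = 0) : u = 0 :=
    (smul_eq_zero.mp ((two_smul F u).trans hu)).resolve_left h2
  let f : A →+ B := φ
  let μ : A →+ A →+ B := AddMonoidHom.mul.compr₂ f
  let δ : A →+ A →+ B := μ - (AddMonoidHom.mul.comp f).compl₂ f
  let δ' : A →+ A →+ B := μ - (AddMonoidHom.mul.flip.comp f).compl₂ f
  have hδ (a b : A) : δ a b = 0 ∨ δ' a b = 0 :=
    eq_zero_or_eq_zero_of_forall_mul_mul_add_mul_mul_eq_zero hprime htwo fun y => by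
      obtain ⟨c, rfl⟩ := hsurj y
      exact jordan_defect_mul_mul_defect_swap_add (φ := f) hφ htwo a b c
  refine (AddMonoidHom.eq_zero_or_eq_zero_of_forall fun a =>
    AddMonoidHom.eq_zero_or_eq_zero_of_forall (hδ a)).imp
    (fun h a b => ?_) (fun h a b => ?_)
  · exact sub_eq_zero.mp (DFunLike.congr_fun (DFunLike.congr_fun h a) b)
  · exact sub_eq_zero.mp (DFunLike.congr_fun (DFunLike.congr_fun h a) b)

theorem herstein_prime
    {F A B : Type*} [Field F] (h2 : (2 : F) ≠ 0)
    [NonUnitalRing A] [Module F A] [SMulCommClass F A A] [IsScalarTower F A A]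
    [NonUnitalRing B] [Module F B] [SMulCommClass F B B] [IsScalarTower F B B]
    (hprime : ∀ a b : B, (∀ y : B, a * y * b = 0) → a = 0 ∨ b = 0)
    (φ : A →ₗ[F] B) (hφ : ∀ x : A, φ (x * x) = φ x * φ x)
    (hsurj : Function.Surjective φ) :
    (∀ a b : A, φ (a * b) = φ a * φ b) ∨ (∀ a b : A, φ (a * b) = φ b * φ a) :=
  herstein_prime_general h2 hprime φ hφ hsurj
end

section
/- Let A be an associative algebra over a field F and let δ : A → A be a linear map satisfying δ(xy) = δ(y)x + yδ(x) for all x, y ∈ A (an antiderivation). Then [x,y]δ(x) = 0 for all x, y ∈ A. -/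
/-- Expanding `δ ((x * y) * z) = δ (x * (y * z))` with the antiderivation rule, the terms
`z * δ y * x` cancel and what remains is this identity. -/
theorem mul_commutator_eq_commutator_mul_of_antiderivation {A : Type*} [NonUnitalRing A]
    {δ : A → A} (hδ : ∀ x y : A, δ (x * y) = δ y * x + y * δ x) (x y z : A) :
    δ z * (x * y - y * x) = (y * z - z * y) * δ x := by
  have expand := congrArg δ (mul_assoc x y z)
  rw [hδ, hδ, hδ, hδ] at expand
  rw [← sub_eq_zero]
  calc δ z * (x * y - y * x) - (y * z - z * y) * δ x
      = (δ z * (x * y) + z * (δ y * x + y * δ x)) - ((δ z * y + z * δ y) * x + y * z * δ x) := by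
        noncomm_ring
    _ = 0 := by rw [expand, sub_self]

theorem antiderivation_commutator_annihilates_general
    {F A : Type*} [Field F]
    [NonUnitalRing A] [Module F A]
    (δ : A →ₗ[F] A) (hδ : ∀ x y : A, δ (x * y) = δ y * x + y * δ x) :
    ∀ x y : A, (x * y - y * x) * δ x = 0 := by
  intro x y
  rw [← mul_commutator_eq_commutator_mul_of_antiderivation hδ x x y, sub_self, mul_zero]

theorem antiderivation_commutator_annihilates
    {F A : Type*} [Field F]
    [NonUnitalRing A] [Module F A] [SMulCommClass F A A] [IsScalarTower F A A]
    (δ : A →ₗ[F] A) (hδ : ∀ x y : A, δ (x * y) = δ y * x + y * δ x) :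
    ∀ x y : A, (x * y - y * x) * δ x = 0 :=
  antiderivation_commutator_annihilates_general δ hδ
end

section
/- Let A be a semiprime associative algebra over a field F with char F ≠ 2 and let δ : A → A be a Jordan derivation, i.e., δ(x²) = δ(x)x + xδ(x) for all x ∈ A. Then δ is a derivation: δ(xy) = δ(x)y + xδ(y) for all x, y ∈ A. -/
/-!
Herstein's argument. Linearizing the Jordan identity and cancelling a factor 2 gives
`δ(xax) = δx·a·x + x·δa·x + x·a·δx`. Expanding `δ(xy·z·yx + yx·z·xy)` in two ways shows that the
derivation defect `g = δ(xy) - δx·y - x·δy` satisfies `g z c + c z g = 0` for `c = [x, y]`. In a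
2-torsion-free semiprime ring this forces `g z c = 0` (Brešar), and by linearization
`g z [u, v] = 0` for all `u, v`; so `g` is central and kills all commutators, whence
`2g² = g δ(c)`. Multiplying `δ(gc + cg) = 0` by `g` then gives `g³ = 0`, and a central nilpotent
element of a semiprime ring vanishes.
-/

def IsSemiprimeRing (A : Type*) [NonUnitalRing A] : Prop :=
  ∀ a : A, (∀ x : A, a * x * a = 0) → a = 0

def IsJordanDerivation {A : Type*} [NonUnitalRing A] (δ : A →+ A) : Prop :=
  ∀ x : A, δ (x * x) = δ x * x + x * δ x

def derivationDefect {A : Type*} [NonUnitalRing A] (δ : A →+ A) : A →+ A →+ A :=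
  AddMonoidHom.mul.compr₂ δ - AddMonoidHom.mul.comp δ - AddMonoidHom.mul.compl₂ δ

@[simp]
theorem derivationDefect_apply {A : Type*} [NonUnitalRing A] (δ : A →+ A) (x y : A) :
    derivationDefect δ x y = δ (x * y) - δ x * y - x * δ y :=
  rfl

theorem eq_of_add_self_eq_add_self {A : Type*} [AddCommGroup A]
    (htf : ∀ a : A, a + a = 0 → a = 0) {a b : A} (h : a + a = b + b) : a = b :=
  sub_eq_zero.mp <| htf _ <| by rw [sub_add_sub_comm, h, sub_self]

namespace IsSemiprimeRing

variable {A : Type*} [NonUnitalRing A]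

theorem mul_mul_eq_zero_symm (hA : IsSemiprimeRing A) {a b : A} (h : ∀ z, a * z * b = 0)
    (z : A) : b * z * a = 0 :=
  hA _ fun t => by
    calc b * z * a * t * (b * z * a) = b * z * ((a * t * b) * (z * a)) := by noncomm_ring
      _ = 0 := by rw [h t, zero_mul, mul_zero]

theorem mul_mul_eq_zero_of_add (hA : IsSemiprimeRing A) {a b a' b' : A}
    (h : ∀ z, a * z * b + a' * z * b' = 0) (h' : ∀ z, a * z * b' = 0) (z : A) :
    a * z * b = 0 :=
  hA _ fun t => by
    calc a * z * b * t * (a * z * b)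
        = (a * z * b + a' * z * b') * (t * (a * z * b)) - a' * z * ((b' * t * a) * (z * b)) := by
          noncomm_ring
      _ = 0 := by rw [h z, hA.mul_mul_eq_zero_symm h' t]; noncomm_ring

/-- Brešar's lemma. -/
theorem mul_mul_eq_zero_of_add_swap (hA : IsSemiprimeRing A)
    (htf : ∀ a : A, a + a = 0 → a = 0) {a b : A} (h : ∀ z, a * z * b + b * z * a = 0) (z : A) :
    a * z * b = 0 :=
  hA _ fun t => htf _ <| by
    have e1 := congrArg (· * (t * (a * z * b))) (h z)
    have e2 := congrArg (· * (z * b)) (h (z * a * t))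
    have e3 := congrArg (fun w => a * z * (w * (z * b))) (h t)
    simp only [zero_mul, mul_zero] at e1 e2 e3
    linear_combination (norm := noncomm_ring) e1 - e2 + e3

theorem mul_mul_eq_zero_of_diag {M : Type*} [AddCommMonoid M] (hA : IsSemiprimeRing A)
    (f g : M →+ A) (h : ∀ m z, f m * z * g m = 0) (m n : M) (z : A) : f m * z * g n = 0 :=
  hA.mul_mul_eq_zero_of_add (a' := f n) (b' := g m) (fun z => by
    have e := h (m + n) z
    simp only [map_add] at e
    linear_combination (norm := noncomm_ring) e - h m z - h n z) (h m) z

theorem mul_mul_eq_zero_of_bilin (hA : IsSemiprimeRing A) (G C : A →+ A →+ A)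
    (h : ∀ x y z, G x y * z * C x y = 0) (x y u v z : A) : G x y * z * C u v = 0 :=
  hA.mul_mul_eq_zero_of_diag (G x) (C u)
    (fun y z => hA.mul_mul_eq_zero_of_diag (G.flip y) (C.flip y) (fun x z => h x y z) x u z) y v z

theorem eq_zero_of_commute_of_mul_self_eq_zero (hA : IsSemiprimeRing A) {g : A}
    (hg : ∀ t, g * t = t * g) (h : g * g = 0) : g = 0 :=
  hA _ fun t => by rw [hg t, mul_assoc, h, mul_zero]

theorem commute_of_mul_mul_lie_eq_zero (hA : IsSemiprimeRing A) {g : A}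
    (h : ∀ u v z : A, g * z * ⁅u, v⁆ = 0) (t : A) : g * t = t * g :=
  sub_eq_zero.mp <| hA _ fun z => by
    have e1 := h g t (t * z)
    have e2 := congrArg (t * ·) (h g t z)
    simp only [Ring.lie_def, mul_zero] at e1 e2
    linear_combination (norm := noncomm_ring) e1 - e2

theorem mul_lie_eq_zero (hA : IsSemiprimeRing A) {g : A}
    (h : ∀ u v z : A, g * z * ⁅u, v⁆ = 0) (u v : A) : g * ⁅u, v⁆ = 0 :=
  hA _ fun t => by
    have hg := hA.commute_of_mul_mul_lie_eq_zero h
    calc g * ⁅u, v⁆ * t * (g * ⁅u, v⁆) = g * ⁅u, v⁆ * (t * g) * ⁅u, v⁆ := by noncomm_ring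
      _ = g * (⁅u, v⁆ * g) * t * ⁅u, v⁆ := by rw [← hg t]; noncomm_ring
      _ = g * g * ⁅u, v⁆ * (t * ⁅u, v⁆) := by rw [← hg ⁅u, v⁆]; noncomm_ring
      _ = 0 := by rw [h u v g, zero_mul]

end IsSemiprimeRing

namespace IsJordanDerivation

variable {A : Type*} [NonUnitalRing A] {δ : A →+ A}

theorem map_mul_add_map_mul_swap (hδ : IsJordanDerivation δ) (x y : A) :
    δ (x * y) + δ (y * x) = δ x * y + x * δ y + δ y * x + y * δ x := by
  have e := hδ (x + y)
  rw [show (x + y) * (x + y) = x * x + (x * y + (y * x + y * y)) by noncomm_ring] at e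
  simp only [map_add, hδ x, hδ y] at e
  linear_combination (norm := noncomm_ring) e

theorem map_mul_mul_self (hδ : IsJordanDerivation δ) (htf : ∀ a : A, a + a = 0 → a = 0)
    (x a : A) : δ (x * a * x) = δ x * a * x + x * δ a * x + x * a * δ x := by
  apply eq_of_add_self_eq_add_self htf
  have e := hδ.map_mul_add_map_mul_swap x (x * a + a * x)
  rw [show x * (x * a + a * x) = x * x * a + x * a * x by noncomm_ring,
    show (x * a + a * x) * x = x * a * x + a * (x * x) by noncomm_ring] at e
  simp only [map_add] at e
  have e' := hδ.map_mul_add_map_mul_swap x a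
  linear_combination (norm := noncomm_ring) e - hδ.map_mul_add_map_mul_swap (x * x) a +
    x * e' + e' * x - a * hδ x - hδ x * a

theorem map_mul_mul_add_map_mul_mul (hδ : IsJordanDerivation δ)
    (htf : ∀ a : A, a + a = 0 → a = 0) (x a y : A) :
    δ (x * a * y) + δ (y * a * x) =
      δ x * a * y + x * δ a * y + x * a * δ y + δ y * a * x + y * δ a * x + y * a * δ x := by
  have e := hδ.map_mul_mul_self htf (x + y) a
  rw [show (x + y) * a * (x + y) = x * a * x + (x * a * y + (y * a * x + y * a * y)) by
    noncomm_ring] at e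
  simp only [map_add] at e
  linear_combination (norm := noncomm_ring)
    e - hδ.map_mul_mul_self htf x a - hδ.map_mul_mul_self htf y a

theorem derivationDefect_mul_mul_lie_add (hδ : IsJordanDerivation δ)
    (htf : ∀ a : A, a + a = 0 → a = 0) (x y z : A) :
    derivationDefect δ x y * z * ⁅x, y⁆ + ⁅x, y⁆ * z * derivationDefect δ x y = 0 := by
  have e := hδ.map_mul_mul_add_map_mul_mul htf (x * y) z (y * x)
  rw [show x * y * z * (y * x) = x * (y * z * y) * x by noncomm_ring,
    show y * x * z * (x * y) = y * (x * z * x) * y by noncomm_ring,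
    hδ.map_mul_mul_self htf x, hδ.map_mul_mul_self htf y, hδ.map_mul_mul_self htf y,
    hδ.map_mul_mul_self htf x] at e
  have s := hδ.map_mul_add_map_mul_swap x y
  simp only [derivationDefect_apply, Ring.lie_def]
  linear_combination (norm := noncomm_ring) s * (z * (x * y)) + (x * y * z) * s + e

theorem eq_zero_of_commute_of_mul_eq_zero (hδ : IsJordanDerivation δ)
    (htf : ∀ a : A, a + a = 0 → a = 0) (hA : IsSemiprimeRing A) {g c : A}
    (hg : ∀ t, g * t = t * g) (hgc : g * c = 0) (h : g * g + g * g = g * δ c) : g = 0 := by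
  have hδgc : δ g * c + g * δ c + δ c * g + c * δ g = 0 := by
    have e := hδ.map_mul_add_map_mul_swap g c
    rwa [← hg c, hgc, ← map_add, add_zero, map_zero, eq_comm] at e
  have hg2 : g * g * δ c = 0 := htf _ <| by
    have e := congrArg (g * ·) hδgc
    simp only [mul_zero] at e
    linear_combination (norm := noncomm_ring)
      e - hg (δ g) * c - δ g * hgc + g * hg (δ c) - hgc * δ g
  have hg3 : g * (g * g) = 0 := htf _ <| by
    linear_combination (norm := noncomm_ring) g * h + hg2
  refine hA.eq_zero_of_commute_of_mul_self_eq_zero hg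
    (hA.eq_zero_of_commute_of_mul_self_eq_zero (fun t => ?_) ?_)
  · rw [mul_assoc, hg t, ← mul_assoc, hg t, mul_assoc]
  · rw [mul_assoc, hg3, mul_zero]

theorem derivationDefect_eq_zero (hδ : IsJordanDerivation δ)
    (htf : ∀ a : A, a + a = 0 → a = 0) (hA : IsSemiprimeRing A) (x y : A) :
    derivationDefect δ x y = 0 := by
  have hlie : ∀ u v z, derivationDefect δ x y * z * ⁅u, v⁆ = 0 :=
    hA.mul_mul_eq_zero_of_bilin _ (AddMonoidHom.mul - AddMonoidHom.mul.flip)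
      (fun x y => hA.mul_mul_eq_zero_of_add_swap htf (hδ.derivationDefect_mul_mul_lie_add htf x y))
      x y
  have hkill := hA.mul_lie_eq_zero hlie
  refine hδ.eq_zero_of_commute_of_mul_eq_zero htf hA (hA.commute_of_mul_mul_lie_eq_zero hlie)
    (hkill x y) ?_
  have e1 := hkill (δ x) y
  have e2 := hkill x (δ y)
  have s := hδ.map_mul_add_map_mul_swap x y
  simp only [derivationDefect_apply, Ring.lie_def, map_sub] at e1 e2 ⊢
  linear_combination (norm := noncomm_ring) (δ (x * y) - δ x * y - x * δ y) * s - e1 - e2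

theorem map_mul (hδ : IsJordanDerivation δ) (htf : ∀ a : A, a + a = 0 → a = 0)
    (hA : IsSemiprimeRing A) (x y : A) : δ (x * y) = δ x * y + x * δ y := by
  rw [← sub_eq_zero, ← sub_sub]
  exact hδ.derivationDefect_eq_zero htf hA x y

end IsJordanDerivation

theorem cusack_jordan_derivation_semiprime_general
    {F A : Type*} [Field F] (h2 : (2 : F) ≠ 0)
    [NonUnitalRing A] [Module F A]
    (hsemiprime : ∀ a : A, (∀ x : A, a * x * a = 0) → a = 0)
    (δ : A →ₗ[F] A) (hδ : ∀ x : A, δ (x * x) = δ x * x + x * δ x) :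
    ∀ x y : A, δ (x * y) = δ x * y + x * δ y := by
  have htf : ∀ a : A, a + a = 0 → a = 0 := fun a ha => by
    rwa [← two_smul F, smul_eq_zero, or_iff_right h2] at ha
  exact IsJordanDerivation.map_mul (δ := δ.toAddMonoidHom) hδ htf hsemiprime

theorem cusack_jordan_derivation_semiprime
    {F A : Type*} [Field F] (h2 : (2 : F) ≠ 0)
    [NonUnitalRing A] [Module F A] [SMulCommClass F A A] [IsScalarTower F A A]
    (hsemiprime : ∀ a : A, (∀ x : A, a * x * a = 0) → a = 0)
    (δ : A →ₗ[F] A) (hδ : ∀ x : A, δ (x * x) = δ x * x + x * δ x) :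
    ∀ x y : A, δ (x * y) = δ x * y + x * δ y :=
  cusack_jordan_derivation_semiprime_general h2 hsemiprime δ hδ
end
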